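/- (Dilworth) In a finite poset P, the maximum size of an antichain equals the minimum number of chains needed to cover P. -/

import Mathlib

/-!
Galvin's induction. Let `a` be a maximal element of `s` and colour `t = s \ {a}` by chains with
`width t` colours. If `width s > width t`, then `a` gets a colour of its own. Otherwise every
maximum antichain of `t` meets every colour class `i`, and the elements of class `i` that lie in
some maximum antichain of `t` have a greatest one, `xᵢ`. The `xᵢ` form a maximum antichain of `t`,
which `a` cannot extend, so `xᵢ ≤ a` for some `i`. The chain `K = {a} ∪ {y ∈ class i | y ≤ xᵢ}`
then meets every maximum antichain of `t`, so `width (s \ K) < width s`, and induction on `s \ K`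
finishes.
-/

open Finset

section

variable {α : Type*}

theorem IsAntichain.card_le_card_of_chain_cover {r : α → α → Prop} {A : Finset α}
    {C : Finset (Finset α)} (hA : IsAntichain r (A : Set α))
    (hC : ∀ c ∈ C, IsChain r (c : Set α)) (hcover : ∀ x ∈ A, ∃ c ∈ C, x ∈ c) : #A ≤ #C := by
  choose! g hgC hmem using hcover
  refine card_le_card_of_injOn g hgC fun x hx y hy hxy => ?_
  have hxy' : x ∈ (g x : Set α) ∩ A ∧ y ∈ (g x : Set α) ∩ A :=
    ⟨⟨hmem x hx, hx⟩, ⟨hxy ▸ hmem y hy, hy⟩⟩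
  exact inter_subsingleton_of_isChain_of_isAntichain (hC _ (hgC x hx)) hA hxy'.1 hxy'.2

theorem IsChain.exists_isGreatest [Preorder α] {s : Set α} (hc : IsChain (· ≤ ·) s)
    (hfin : s.Finite) (hne : s.Nonempty) : ∃ x, IsGreatest s x := by
  obtain ⟨m, hm⟩ := hfin.exists_maximal hne
  exact ⟨m, hm.prop, fun y hy => (hc.total hm.prop hy).elim (hm.2 hy) id⟩

variable [PartialOrder α]

namespace Finset

open Classical in
noncomputable def width (s : Finset α) : ℕ :=
  (s.powerset.filter fun A : Finset α => IsAntichain (· ≤ ·) (A : Set α)).sup card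

/-- Maximum by cardinality, unlike Mathlib's `IsMaxAntichain` (maximal under inclusion). -/
def IsMaximumAntichain (s A : Finset α) : Prop :=
  A ⊆ s ∧ IsAntichain (· ≤ ·) (A : Set α) ∧ #A = s.width

def InMaximumAntichain (s : Finset α) (x : α) : Prop :=
  ∃ A, s.IsMaximumAntichain A ∧ x ∈ A

theorem card_le_width {s A : Finset α} (hAs : A ⊆ s) (hA : IsAntichain (· ≤ ·) (A : Set α)) :
    #A ≤ s.width := by
  classical
  exact le_sup (f := card) (mem_filter.2 ⟨mem_powerset.2 hAs, hA⟩)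

theorem exists_isMaximumAntichain (s : Finset α) : ∃ A, s.IsMaximumAntichain A := by
  classical
  have hne : (s.powerset.filter fun A : Finset α => IsAntichain (· ≤ ·) (A : Set α)).Nonempty :=
    ⟨∅, mem_filter.2 ⟨empty_mem_powerset s, by simp⟩⟩
  obtain ⟨A, hA, hcard⟩ := exists_mem_eq_sup _ hne card
  rw [mem_filter, mem_powerset] at hA
  exact ⟨A, hA.1, hA.2, hcard.symm⟩

theorem width_mono {s t : Finset α} (h : s ⊆ t) : s.width ≤ t.width := by
  obtain ⟨A, hAs, hA, hcard⟩ := s.exists_isMaximumAntichain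
  exact hcard ▸ card_le_width (hAs.trans h) hA

end Finset

/-- A partition of `s` into at most `n` chains, recorded by the index of each element's chain. -/
structure IsChainColoring (s : Finset α) (f : α → ℕ) (n : ℕ) : Prop where
  lt : ∀ x ∈ s, f x < n
  le_or_le : ∀ x ∈ s, ∀ y ∈ s, f x = f y → x ≤ y ∨ y ≤ x

namespace IsChainColoring

variable {s : Finset α} {f : α → ℕ} {n : ℕ}

theorem of_le {m : ℕ} (hf : IsChainColoring s f n) (h : n ≤ m) : IsChainColoring s f m :=
  ⟨fun x hx => (hf.lt x hx).trans_le h, hf.le_or_le⟩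

theorem union_of_isChain [DecidableEq α] {K : Finset α} (hf : IsChainColoring s f n)
    (hK : IsChain (· ≤ ·) (K : Set α)) :
    IsChainColoring (s ∪ K) (fun x => if x ∈ K then n else f x) (n + 1) := by
  have hs : ∀ x ∈ s ∪ K, x ∉ K → x ∈ s := fun x hx hxK => (mem_union.1 hx).resolve_right hxK
  refine ⟨fun x hx => ?_, fun x hx y hy hxy => ?_⟩
  · split_ifs with hxK
    · exact n.lt_succ_self
    · exact (hf.lt x (hs x hx hxK)).trans n.lt_succ_self
  · by_cases hxK : x ∈ K <;> by_cases hyK : y ∈ K <;> simp only [hxK, hyK, if_true, if_false] at hxy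
    · exact hK.total hxK hyK
    · exact absurd hxy (hf.lt y (hs y hy hyK)).ne'
    · exact absurd hxy (hf.lt x (hs x hx hxK)).ne
    · exact hf.le_or_le x (hs x hx hxK) y (hs y hy hyK) hxy

theorem injOn_of_isAntichain {A : Finset α} (hf : IsChainColoring s f n) (hAs : A ⊆ s)
    (hA : IsAntichain (· ≤ ·) (A : Set α)) : Set.InjOn f A := fun x hx y hy hxy =>
  (hf.le_or_le x (hAs hx) y (hAs hy) hxy).elim (hA.eq hx hy) (hA.eq' hx hy)

theorem exists_chain_cover [DecidableEq α] (hf : IsChainColoring s f n) :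
    ∃ C : Finset (Finset α), (∀ c ∈ C, IsChain (· ≤ ·) (c : Set α)) ∧
      (∀ x ∈ s, ∃ c ∈ C, x ∈ c) ∧ #C ≤ n := by
  refine ⟨(range n).image fun i => {x ∈ s | f x = i}, ?_, fun x hx => ?_, ?_⟩
  · simp only [mem_image, mem_range]
    rintro _ ⟨i, -, rfl⟩ x hx y hy -
    simp only [coe_filter, Set.mem_ofPred_eq] at hx hy
    exact hf.le_or_le x hx.1 y hy.1 (hx.2.trans hy.2.symm)
  · exact ⟨_, mem_image_of_mem _ (mem_range.2 (hf.lt x hx)), mem_filter.2 ⟨hx, rfl⟩⟩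
  · exact card_image_le.trans (card_range n).le

theorem exists_mem_color (hf : IsChainColoring s f s.width) {A : Finset α}
    (hA : s.IsMaximumAntichain A) {i : ℕ} (hi : i < s.width) : ∃ a ∈ A, f a = i := by
  classical
  have himage : A.image f = range s.width := by
    refine eq_of_subset_of_card_le (fun j hj => ?_) ?_
    · obtain ⟨a, ha, rfl⟩ := mem_image.1 hj
      exact mem_range.2 (hf.lt a (hA.1 ha))
    · rw [card_image_of_injOn (hf.injOn_of_isAntichain hA.1 hA.2.1), hA.2.2, card_range]
  rwa [← mem_range, ← himage, mem_image] at hi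

theorem exists_isGreatest (hf : IsChainColoring s f s.width) {i : ℕ} (hi : i < s.width) :
    ∃ x, IsGreatest {y | y ∈ s ∧ f y = i ∧ s.InMaximumAntichain y} x := by
  obtain ⟨A, hA⟩ := s.exists_isMaximumAntichain
  obtain ⟨a, ha, hfa⟩ := hf.exists_mem_color hA hi
  refine IsChain.exists_isGreatest (fun x hx y hy _ => ?_) ?_ ⟨a, hA.1 ha, hfa, A, hA, ha⟩
  · exact hf.le_or_le x hx.1 y hy.1 (hx.2.1.trans hy.2.1.symm)
  · exact s.finite_toSet.subset fun y hy => hy.1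

theorem isMaximumAntichain_image [DecidableEq α] (hf : IsChainColoring s f s.width) {x : ℕ → α}
    (hx : ∀ i < s.width, IsGreatest {y | y ∈ s ∧ f y = i ∧ s.InMaximumAntichain y} (x i)) :
    s.IsMaximumAntichain ((range s.width).image x) := by
  have hfx : ∀ i < s.width, f (x i) = i := fun i hi => (hx i hi).1.2.1
  refine ⟨fun _ h => ?_, fun u hu v hv hne hle => ?_, ?_⟩
  · obtain ⟨i, hi, rfl⟩ := mem_image.1 h
    exact (hx i (mem_range.1 hi)).1.1
  · obtain ⟨i, hi, rfl⟩ := mem_image.1 hu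
    obtain ⟨j, hj, rfl⟩ := mem_image.1 hv
    rw [mem_range] at hi hj
    -- a maximum antichain `B` through `x j` meets class `i` below `x i`, hence below `x j`
    obtain ⟨B, hB, hxB⟩ := (hx j hj).1.2.2
    obtain ⟨y, hyB, hfy⟩ := hf.exists_mem_color hB hi
    have hyx : y ≤ x i := (hx i hi).2 ⟨hB.1 hyB, hfy, B, hB, hyB⟩
    have hij : i = j := by
      rw [← hfy, hB.2.1.eq hyB hxB (hyx.trans hle), hfx j hj]
    exact hne (congrArg x hij)
  · rw [card_image_of_injOn fun i hi j hj h => ?_, card_range]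
    rw [← hfx i (mem_range.1 hi), ← hfx j (mem_range.1 hj), h]

end IsChainColoring

theorem Finset.exists_chain_width_sdiff_lt [DecidableEq α] {s : Finset α} {a : α} {f : α → ℕ}
    (ha : Maximal (· ∈ s) a) (hf : IsChainColoring (s.erase a) f (s.erase a).width)
    (hw : (s.erase a).width = s.width) :
    ∃ K ⊆ s, a ∈ K ∧ IsChain (· ≤ ·) (K : Set α) ∧ (s \ K).width < s.width := by
  classical
  set t := s.erase a
  have : Nonempty α := ⟨a⟩
  choose! x hx using fun i (hi : i < t.width) => hf.exists_isGreatest hi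
  have hA := hf.isMaximumAntichain_image hx
  obtain ⟨i, hi, hxa⟩ : ∃ i < t.width, x i ≤ a := by
    by_contra! hlt
    have hanti : IsAntichain (· ≤ ·) ((insert a ((range t.width).image x) : Finset α) : Set α) := by
      rw [coe_insert]
      refine hA.2.1.insert (fun u hu _ hua => ?_) (fun u hu hau hle => hau ?_)
      · obtain ⟨j, hj, rfl⟩ := mem_image.1 hu
        exact hlt j (mem_range.1 hj) hua
      · exact le_antisymm hle (ha.2 (mem_of_mem_erase (hA.1 hu)) hle)
    have hcard := card_le_width (insert_subset ha.prop (hA.1.trans (erase_subset a s))) hanti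
    rw [card_insert_of_notMem fun h => notMem_erase a s (hA.1 h), hA.2.2, hw] at hcard
    omega
  set K := insert a {y ∈ t | f y = i ∧ y ≤ x i}
  refine ⟨K, insert_subset ha.prop ?_, mem_insert_self _ _, ?_, ?_⟩
  · exact (filter_subset _ _).trans (erase_subset a s)
  · rw [coe_insert]
    refine IsChain.insert (fun u hu v hv _ => ?_) fun u hu _ =>
      Or.inr ((mem_filter.1 hu).2.2.trans hxa)
    exact hf.le_or_le u (mem_filter.1 hu).1 v (mem_filter.1 hv).1
      ((mem_filter.1 hu).2.1.trans (mem_filter.1 hv).2.1.symm)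
  · obtain ⟨B, hBs, hB, hBcard⟩ := (s \ K).exists_isMaximumAntichain
    have hBt : B ⊆ t := fun y hy => mem_erase.2
      ⟨fun h => (mem_sdiff.1 (hBs hy)).2 (h ▸ mem_insert_self _ _), (mem_sdiff.1 (hBs hy)).1⟩
    rw [← hBcard, ← hw]
    refine (card_le_width hBt hB).lt_of_ne fun hmax => ?_
    -- otherwise `B` is a maximum antichain of `t` missing `K`, yet it meets class `i` below `x i`
    obtain ⟨y, hyB, hfy⟩ := hf.exists_mem_color ⟨hBt, hB, hmax⟩ hi
    have hyx : y ≤ x i := (hx i hi).2 ⟨hBt hyB, hfy, B, ⟨hBt, hB, hmax⟩, hyB⟩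
    exact (mem_sdiff.1 (hBs hyB)).2 (mem_insert_of_mem (mem_filter.2 ⟨hBt hyB, hfy, hyx⟩))

theorem Finset.exists_isChainColoring_width (s : Finset α) : ∃ f, IsChainColoring s f s.width := by
  classical
  induction s using Finset.strongInduction with
  | H s ih =>
  rcases s.eq_empty_or_nonempty with rfl | hs
  · exact ⟨0, by simp, by simp⟩
  obtain ⟨a, ha⟩ := s.exists_maximal hs
  obtain ⟨f, hf⟩ := ih _ (erase_ssubset ha.prop)
  obtain ⟨K, hKs, haK, hK, hlt⟩ :
      ∃ K ⊆ s, a ∈ K ∧ IsChain (· ≤ ·) (K : Set α) ∧ (s \ K).width < s.width := by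
    rcases (width_mono (erase_subset a s)).lt_or_eq with hlt | hw
    · refine ⟨{a}, singleton_subset_iff.2 ha.prop, mem_singleton_self a, ?_, ?_⟩
      · simp
      · rwa [sdiff_singleton_eq_erase]
    · exact exists_chain_width_sdiff_lt ha hf hw
  obtain ⟨g, hg⟩ := ih _ (sdiff_ssubset hKs ⟨a, haK⟩)
  have hcol := (hg.union_of_isChain hK).of_le hlt
  rw [sdiff_union_of_subset hKs] at hcol
  exact ⟨_, hcol⟩

end

theorem dilworth_general (α : Type*) [PartialOrder α] [Fintype α] :
    sSup {k : ℕ | ∃ A : Finset α, IsAntichain (· ≤ ·) (A : Set α) ∧ A.card = k} =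
    sInf {k : ℕ | ∃ C : Finset (Finset α),
      (∀ c ∈ C, IsChain (· ≤ ·) (c : Set α)) ∧ (∀ x : α, ∃ c ∈ C, x ∈ c) ∧ C.card = k} := by
  classical
  obtain ⟨A, -, hA, hAcard⟩ := (univ : Finset α).exists_isMaximumAntichain
  have hwidth_le : ∀ C : Finset (Finset α), (∀ c ∈ C, IsChain (· ≤ ·) (c : Set α)) →
      (∀ x : α, ∃ c ∈ C, x ∈ c) → (univ : Finset α).width ≤ #C := fun C hC hcover =>
    hAcard ▸ hA.card_le_card_of_chain_cover hC fun x _ => hcover x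
  obtain ⟨f, hf⟩ := (univ : Finset α).exists_isChainColoring_width
  obtain ⟨C, hC, hcover, hCcard⟩ := hf.exists_chain_cover
  have hcover' : ∀ x : α, ∃ c ∈ C, x ∈ c := fun x => hcover x (mem_univ x)
  have hgreatest : IsGreatest {k : ℕ | ∃ A : Finset α, IsAntichain (· ≤ ·) (A : Set α) ∧
      A.card = k} (univ : Finset α).width :=
    ⟨⟨A, hA, hAcard⟩, fun _ ⟨B, hB, hBcard⟩ => hBcard ▸ card_le_width (subset_univ B) hB⟩
  have hleast : IsLeast {k : ℕ | ∃ C : Finset (Finset α), (∀ c ∈ C, IsChain (· ≤ ·) (c : Set α)) ∧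
      (∀ x : α, ∃ c ∈ C, x ∈ c) ∧ C.card = k} (univ : Finset α).width :=
    ⟨⟨C, hC, hcover', hCcard.antisymm (hwidth_le C hC hcover')⟩,
      fun _ ⟨D, hD, hDcover, hDcard⟩ => hDcard ▸ hwidth_le D hD hDcover⟩
  rw [hgreatest.csSup_eq, hleast.csInf_eq]

/-- Dilworth's theorem: in a finite poset, the maximum size of an antichain equals the
minimum number of chains needed to cover the poset. -/
theorem dilworth (α : Type*) [PartialOrder α] [Fintype α] [DecidableEq α] :
    sSup {k : ℕ | ∃ A : Finset α, IsAntichain (· ≤ ·) (A : Set α) ∧ A.card = k} =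
    sInf {k : ℕ | ∃ C : Finset (Finset α),
      (∀ c ∈ C, IsChain (· ≤ ·) (c : Set α)) ∧ (∀ x : α, ∃ c ∈ C, x ∈ c) ∧ C.card = k} :=
  dilworth_general α
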